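/- arXiv:2211.12372 — 2 statements merged into one kernel-verified Lean document; each statement's English description precedes it below -/
import Mathlib

section
/- Characterization of essential F-sets via decreasing sequences: Let (S,·) be a countable semigroup and F a family of subsets of S with the Ramsey property such that β(F) = {p ∈ βS : p ⊆ F} is a subsemigroup of βS. Then A ⊆ S is an essential F-set (i.e., A ∈ p for some idempotent p ∈ β(F)) if and only if there is a decreasing sequence ⟨Cₙ⟩ of subsets of A such that (i) for each n and each x ∈ Cₙ there exists m with C_m ⊆ x⁻¹Cₙ, and (ii) each Cₙ ∈ F. -/
/-- The extension of the semigroup operation of `S` to the ultrafilters `βS`: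
`A ∈ p * q` iff `{x : x⁻¹A ∈ q} ∈ p`. -/
noncomputable def umul {S : Type*} [Semigroup S] (p q : Ultrafilter S) :
    Ultrafilter S :=
  p.bind fun x => q.map (x * ·)

section Aux

attribute [local instance] Ultrafilter.semigroup Ultrafilter.mul

variable {S : Type*} [Semigroup S]

lemma mem_umul (p q : Ultrafilter S) (A : Set S) :
    A ∈ umul p q ↔ {x | {y | x * y ∈ A} ∈ q} ∈ p := by
  show A ∈ (Filter.bind ↑p fun x => ↑(q.map (x * ·))) ↔ _
  rw [Filter.mem_bind]
  simp only [Ultrafilter.mem_coe, Ultrafilter.mem_map]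
  constructor
  · rintro ⟨t, ht, h⟩
    exact Filter.mem_of_superset ht fun x hx => h x hx
  · intro h
    exact ⟨_, h, fun x hx => hx⟩

lemma umul_eq_mul (p q : Ultrafilter S) : umul p q = p * q := by
  apply Ultrafilter.coe_inj.mp
  apply Filter.ext
  intro A
  rw [show (A ∈ (↑(umul p q) : Filter S)) ↔ A ∈ umul p q from Iff.rfl, mem_umul]
  exact Iff.symm (Ultrafilter.eventually_mul p q (· ∈ A))

/-- `fstar p B` is the set of `x ∈ B` with `x⁻¹B ∈ p`. -/
def fstar (p : Ultrafilter S) (B : Set S) : Set S :=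
  {x | x ∈ B ∧ {y | x * y ∈ B} ∈ p}

lemma fstar_subset (p : Ultrafilter S) (B : Set S) : fstar p B ⊆ B :=
  fun _ hx => hx.1

lemma fstar_mem (p : Ultrafilter S) (hp : umul p p = p) {B : Set S} (hB : B ∈ p) :
    fstar p B ∈ p := by
  have h : B ∈ umul p p := by rw [hp]; exact hB
  rw [mem_umul] at h
  have := p.toFilter.inter_mem hB h
  exact Filter.mem_of_superset this fun x hx => ⟨hx.1, hx.2⟩

lemma fstar_shift (p : Ultrafilter S) (hp : umul p p = p) {B : Set S} (hB : B ∈ p)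
    {x : S} (hx : x ∈ fstar p B) : {y | x * y ∈ fstar p B} ∈ p := by
  obtain ⟨hxB, hD⟩ := hx
  set D : Set S := {y | x * y ∈ B} with hDdef
  have hDs : fstar p D ∈ p := fstar_mem p hp hD
  refine Filter.mem_of_superset hDs fun y hy => ?_
  obtain ⟨hyD, hyS⟩ := hy
  refine ⟨hyD, ?_⟩
  have : {z | y * z ∈ D} = {z | x * (y * z) ∈ B} := rfl
  refine Filter.mem_of_superset hyS fun z hz => ?_
  show x * y * z ∈ B
  rw [mul_assoc]
  exact hz

open Classical in
/-- Approximations to the decreasing sequence: `approx p s A m` is the whole sequence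
frozen at stage `m`; values at indices `> m` equal the value at `m` computed one step. -/
noncomputable def approx (p : Ultrafilter S) (s : ℕ → S) (A : Set S) : ℕ → ℕ → Set S
  | 0 => fun _ => fstar p A
  | (m + 1) => fun n =>
      if n ≤ m then approx p s A m n
      else
        fstar p (approx p s A m m ∩
          (if s (Nat.unpair m).2 ∈ approx p s A m (Nat.unpair m).1 then
            {y | s (Nat.unpair m).2 * y ∈ approx p s A m (Nat.unpair m).1}
          else Set.univ))

/-- The diagonal sequence. -/
noncomputable def Cseq (p : Ultrafilter S) (s : ℕ → S) (A : Set S) (n : ℕ) : Set S :=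
  approx p s A n n

lemma approx_agree (p : Ultrafilter S) (s : ℕ → S) (A : Set S) :
    ∀ m n, n ≤ m → approx p s A m n = Cseq p s A n := by
  intro m
  induction m with
  | zero => intro n hn; interval_cases n; rfl
  | succ m ih =>
    intro n hn
    rcases Nat.lt_or_ge n (m + 1) with h | h
    · have h' : n ≤ m := Nat.lt_succ_iff.mp h
      show (if n ≤ m then approx p s A m n else _) = _
      rw [if_pos h', ih n h']
    · have : n = m + 1 := le_antisymm hn h
      subst this; rfl

open Classical in
lemma Cseq_succ (p : Ultrafilter S) (s : ℕ → S) (A : Set S) (m : ℕ) :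
    Cseq p s A (m + 1) =
      fstar p (Cseq p s A m ∩
        (if s (Nat.unpair m).2 ∈ Cseq p s A (Nat.unpair m).1 then
          {y | s (Nat.unpair m).2 * y ∈ Cseq p s A (Nat.unpair m).1}
        else Set.univ)) := by
  show (if m + 1 ≤ m then _ else _) = _
  rw [if_neg (by omega)]
  rw [approx_agree p s A m m le_rfl, approx_agree p s A m (Nat.unpair m).1 (Nat.unpair_left_le m)]

end Aux

/-- Characterization of essential `F`-sets in a countable semigroup via
decreasing sequences: `A` belongs to some idempotent ultrafilter in `β(F)` iff
there is a decreasing sequence `⟨Cₙ⟩` of subsets of `A`, all in `F`, such that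
for every `n` and `x ∈ Cₙ` there is `m` with `C_m ⊆ x⁻¹Cₙ`. -/
theorem essential_F_set_iff_decreasing_sequence {S : Type*} [Semigroup S]
    [Countable S] (F : Set (Set S)) (hne : F.Nonempty)
    (hmem : ∀ A ∈ F, A.Nonempty)
    (hup : ∀ A ∈ F, ∀ B : Set S, A ⊆ B → B ∈ F)
    (hram : ∀ A ∈ F, ∀ A₁ A₂ : Set S, A = A₁ ∪ A₂ → A₁ ∈ F ∨ A₂ ∈ F)
    (hsub : ∀ p q : Ultrafilter S,
        (∀ A : Set S, A ∈ p → A ∈ F) → (∀ A : Set S, A ∈ q → A ∈ F) →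
        (∀ A : Set S, A ∈ umul p q → A ∈ F))
    (A : Set S) :
    (∃ p : Ultrafilter S, umul p p = p ∧ (∀ B : Set S, B ∈ p → B ∈ F) ∧ A ∈ p) ↔
    (∃ C : ℕ → Set S, (∀ n, C n ⊆ A) ∧ (∀ n, C (n + 1) ⊆ C n) ∧
        (∀ n, ∀ x ∈ C n, ∃ m, C m ⊆ {y : S | x * y ∈ C n}) ∧
        (∀ n, C n ∈ F)) := by
  classical
  letI : Semigroup (Ultrafilter S) := Ultrafilter.semigroup
  have hSne : Nonempty S := by
    obtain ⟨B, hB⟩ := hne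
    obtain ⟨x, _⟩ := hmem B hB
    exact ⟨x⟩
  constructor
  · -- forward direction
    rintro ⟨p, hp, hpF, hA⟩
    obtain ⟨s, hs⟩ := exists_surjective_nat S
    set C : ℕ → Set S := Cseq p s A with hCdef
    -- every term is `fstar` of a `p`-large set
    have key : ∀ n, ∃ B ∈ p, C n = fstar p B := by
      intro n
      induction n using Nat.strong_induction_on with
      | _ n ih =>
        match n with
        | 0 => exact ⟨A, hA, rfl⟩
        | (m + 1) =>
          obtain ⟨B, hB, hCB⟩ := ih m (Nat.lt_succ_self m)
          have hCm : C m ∈ p := by rw [hCB]; exact fstar_mem p hp hB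
          set E : Set S :=
            (if s (Nat.unpair m).2 ∈ C (Nat.unpair m).1 then
              {y | s (Nat.unpair m).2 * y ∈ C (Nat.unpair m).1}
            else Set.univ) with hEdef
          have hE : E ∈ p := by
            rw [hEdef]
            split_ifs with h
            · obtain ⟨B', hB', hCB'⟩ := ih (Nat.unpair m).1
                (Nat.lt_succ_of_le (Nat.unpair_left_le m))
              rw [hCB'] at h ⊢
              exact fstar_shift p hp hB' h
            · exact Filter.univ_mem
          refine ⟨C m ∩ E, p.toFilter.inter_mem hCm hE, ?_⟩
          rw [hCdef]
          exact Cseq_succ p s A m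
    have hCp : ∀ n, C n ∈ p := by
      intro n
      obtain ⟨B, hB, hCB⟩ := key n
      rw [hCB]; exact fstar_mem p hp hB
    have hdec : ∀ n, C (n + 1) ⊆ C n := by
      intro n
      rw [hCdef, Cseq_succ p s A n]
      exact (fstar_subset p _).trans Set.inter_subset_left
    refine ⟨C, ?_, hdec, ?_, fun n => hpF _ (hCp n)⟩
    · -- C n ⊆ A
      intro n
      induction n with
      | zero => exact fstar_subset p A
      | succ n ih => exact (hdec n).trans ih
    · -- shift property
      intro n x hx
      obtain ⟨j, hj⟩ := hs x
      refine ⟨Nat.pair n j + 1, ?_⟩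
      rw [hCdef, Cseq_succ p s A (Nat.pair n j)]
      have hun : Nat.unpair (Nat.pair n j) = (n, j) := Nat.unpair_pair n j
      intro y hy
      have := (fstar_subset p _ hy).2
      rw [hun] at this
      simp only [hj] at this
      rw [if_pos hx] at this
      exact this
  · -- reverse direction
    rintro ⟨C, hCA, hCdec, hCshift, hCF⟩
    have hanti : Antitone C := antitone_nat_of_succ_le hCdec
    -- The family H of sets F-large along the sequence
    set H : Set (Set S) := {B | ∀ n, B ∩ C n ∈ F} with hHdef
    have hHup : ∀ B ∈ H, ∀ B' : Set S, B ⊆ B' → B' ∈ H := by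
      intro B hB B' hBB' n
      exact hup _ (hB n) _ (Set.inter_subset_inter_left _ hBB')
    have hHuniv : Set.univ ∈ H := by
      intro n
      rw [Set.univ_inter]; exact hCF n
    have hHempty : (∅ : Set S) ∉ H := by
      intro h
      have := hmem _ (h 0)
      simp at this
    have hHram : ∀ B ∈ H, ∀ B₁ B₂ : Set S, B = B₁ ∪ B₂ → B₁ ∈ H ∨ B₂ ∈ H := by
      intro B hB B₁ B₂ hBu
      by_contra h
      push_neg at h
      obtain ⟨h1, h2⟩ := h
      simp only [hHdef, Set.mem_setOf_eq, not_forall] at h1 h2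
      obtain ⟨n₁, hn₁⟩ := h1
      obtain ⟨n₂, hn₂⟩ := h2
      set n := max n₁ n₂
      have hBn : B ∩ C n ∈ F := hB n
      have hsplit : B ∩ C n = (B₁ ∩ C n) ∪ (B₂ ∩ C n) := by
        rw [hBu, Set.union_inter_distrib_right]
      rcases hram _ hBn _ _ hsplit with h | h
      · exact hn₁ (hup _ h _ (Set.inter_subset_inter_right _ (hanti (le_max_left n₁ n₂))))
      · exact hn₂ (hup _ h _ (Set.inter_subset_inter_right _ (hanti (le_max_right n₁ n₂))))
    -- the dual filter
    set D : Filter S :=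
      { sets := {B | Bᶜ ∉ H}
        univ_sets := by
          simp only [Set.mem_setOf_eq, Set.compl_univ]
          exact hHempty
        sets_of_superset := by
          intro B B' hB hBB' hB'
          exact hB (hHup _ hB' _ (Set.compl_subset_compl.mpr hBB'))
        inter_sets := by
          intro B B' hB hB' h
          have : (B ∩ B')ᶜ = Bᶜ ∪ B'ᶜ := Set.compl_inter B B'
          rcases hHram _ h _ _ this with h1 | h1
          · exact hB h1
          · exact hB' h1 } with hDdef
    have hDne : D.NeBot := by
      rw [Filter.neBot_iff]
      intro h
      have : (∅ : Set S) ∈ D := by rw [h]; exact Filter.mem_bot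
      have : (∅ : Set S)ᶜ ∉ H := this
      rw [Set.compl_empty] at this
      exact this hHuniv
    obtain ⟨p0, hp0⟩ := Ultrafilter.exists_le D
    have hp0H' : ∀ B ∈ p0, B ∈ H := by
      intro B hB
      by_contra h
      have hc : Bᶜ ∈ D := by
        show Bᶜᶜ ∉ H
        rw [compl_compl]; exact h
      exact (Ultrafilter.compl_mem_iff_notMem.mp (hp0 hc)) hB
    have hp0F : ∀ B ∈ p0, B ∈ F := fun B hB =>
      hup _ (hp0H' B hB 0) _ Set.inter_subset_left
    have hp0C : ∀ n, C n ∈ p0 := by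
      intro n
      by_contra h
      have : (C n)ᶜ ∈ p0 := Ultrafilter.compl_mem_iff_notMem.mpr h
      have := hp0H' _ this n
      have h0 : (C n)ᶜ ∩ C n = ∅ := Set.compl_inter_self (C n)
      rw [h0] at this
      obtain ⟨x, hx⟩ := hmem _ this
      exact hx
    -- the compact subsemigroup
    set T : Set (Ultrafilter S) :=
      {q | (∀ B : Set S, B ∈ q → B ∈ F) ∧ ∀ n, C n ∈ q} with hTdef
    have hTclosed : IsClosed T := by
      have : T = (⋂ (B : {B : Set S // B ∉ F}), {q : Ultrafilter S | (B : Set S)ᶜ ∈ q}) ∩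
          ⋂ n, {q : Ultrafilter S | C n ∈ q} := by
        ext q
        simp only [hTdef, Set.mem_setOf_eq, Set.mem_inter_iff, Set.mem_iInter]
        constructor
        · rintro ⟨h1, h2⟩
          refine ⟨fun B => ?_, h2⟩
          exact Ultrafilter.compl_mem_iff_notMem.mpr fun hB => B.2 (h1 _ hB)
        · rintro ⟨h1, h2⟩
          refine ⟨fun B hB => ?_, h2⟩
          by_contra hBF
          exact (Ultrafilter.compl_mem_iff_notMem.mp (h1 ⟨B, hBF⟩)) hB
      rw [this]
      exact ((isClosed_iInter fun B => ultrafilter_isClosed_basic _).inter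
        (isClosed_iInter fun n => ultrafilter_isClosed_basic _))
    have hTmul : ∀ q ∈ T, ∀ r ∈ T, q * r ∈ T := by
      intro q hq r hr
      constructor
      · intro B hB
        refine hsub q r hq.1 hr.1 B ?_
        rw [umul_eq_mul]; exact hB
      · intro n
        have : C n ∈ umul q r := by
          rw [mem_umul]
          refine Filter.mem_of_superset (hq.2 n) fun x hx => ?_
          obtain ⟨m, hm⟩ := hCshift n x hx
          exact Filter.mem_of_superset (hr.2 m) hm
        rw [umul_eq_mul] at this
        exact this
    obtain ⟨q, hqT, hqq⟩ := exists_idempotent_in_compact_subsemigroup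
      Ultrafilter.continuous_mul_left T ⟨p0, hp0F, hp0C⟩ hTclosed.isCompact hTmul
    refine ⟨q, ?_, hqT.1, ?_⟩
    · rw [umul_eq_mul]; exact hqq
    · exact Filter.mem_of_superset (hqT.2 0) (hCA 0)
end

section
/- If A ⊆ ℕ is an essential CR-set and l ∈ ℕ, then the set {(a,b) ∈ ℕ × ℕ : a + kb ∈ A for all k ∈ {0,1,…,l}} is an essential CR-set in (ℕ × ℕ, +). -/
/-- Sum of `f` over a nonempty finite set `α` in a commutative semigroup. -/
def sgSum {ι S : Type*} [LinearOrder ι] [AddCommSemigroup S]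
    (α : Finset ι) (f : ι → S) (h : α.Nonempty) : S :=
  ((α.erase (α.min' h)).sort (· ≤ ·)).foldl (fun x i => x + f i) (f (α.min' h))

/-- `A` is a J-set: for every finite set of sequences there are `a` and a
nonempty finite `H ⊆ ℕ` with `a + ∑_{n ∈ H} f n ∈ A` for each `f`. -/
def JSet {S : Type*} [AddCommSemigroup S] (A : Set S) : Prop :=
  ∀ F : Finset (ℕ → S), ∃ (a : S) (H : Finset ℕ) (hH : H.Nonempty),
    ∀ f ∈ F, a + sgSum H f hH ∈ A

/-- `A` is thick: every finite set can be shifted into `A`. -/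
def Thick {S : Type*} [AddCommSemigroup S] (A : Set S) : Prop :=
  ∀ E : Finset S, ∃ x : S, ∀ e ∈ E, e + x ∈ A

/-- `A` is syndetic: finitely many shifts `-t + A` cover `S`. -/
def Syndetic {S : Type*} [AddCommSemigroup S] (A : Set S) : Prop :=
  ∃ F : Finset S, ∀ x : S, ∃ t ∈ F, t + x ∈ A

/-- `A` is piecewise syndetic: finitely many shifts `-t + A` form a thick set. -/
def PiecewiseSyndetic {S : Type*} [AddCommSemigroup S] (A : Set S) : Prop :=
  ∃ F : Finset S, Thick {x : S | ∃ t ∈ F, t + x ∈ A}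

/-- `A` is a combinatorially rich (CR) set. -/
def CRSet {S : Type*} [AddCommSemigroup S] (A : Set S) : Prop :=
  ∀ n : ℕ, ∃ r : ℕ, ∀ M : Fin r → Fin n → S,
    ∃ (α : Finset (Fin r)) (hα : α.Nonempty) (s : S),
      ∀ j : Fin n, s + sgSum α (fun i => M i j) hα ∈ A

/-- `iterAdd a b k = a + b + ⋯ + b` (`k` copies of `b`). -/
def iterAdd {S : Type*} [AddSemigroup S] (a b : S) : ℕ → S
  | 0 => a
  | k + 1 => iterAdd a b k + b

/-- The extension of the addition of `S` to the ultrafilters `βS`: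
`A ∈ p + q` iff `{x : -x + A ∈ q} ∈ p`. -/
noncomputable def uadd {S : Type*} [AddSemigroup S] (p q : Ultrafilter S) :
    Ultrafilter S :=
  p.bind fun x => q.map (x + ·)

/-- `A` is an essential CR-set: `A` belongs to some idempotent ultrafilter all
of whose members are CR-sets. -/
def EssentialCRSet {S : Type*} [AddCommSemigroup S] (A : Set S) : Prop :=
  ∃ p : Ultrafilter S, uadd p p = p ∧ (∀ B : Set S, B ∈ p → CRSet B) ∧ A ∈ p

/-!
CR-sets are partition regular (a Hales–Jewett argument), so the sets with non-CR complement form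
a filter, and the ultrafilters finer than it are exactly those all of whose members are CR. Let
`p` be an idempotent witnessing that `A` is an essential CR-set, and let `φ k (a, b) = a + k b`.
The ultrafilters `q` on `ℕ × ℕ` finer than that filter with `φ k q = p` for all `k ≤ l` form a
closed subsemigroup of `β(ℕ × ℕ)`: it is nonempty because, for `D ∈ p`, the set of `(a, b)` with
`a + k b ∈ D` for all `k ≤ l` is again CR, and it is closed under addition because the `φ k` are
homomorphisms and `p + p = p`. By Ellis' lemma it contains an idempotent, which witnesses the
claim.
-/

open Filter

section CRSet

variable {S : Type*} [AddCommMonoid S] {A B B₁ B₂ : Set S}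

theorem sgSum_eq_sum {ι : Type*} [LinearOrder ι] (α : Finset ι) (f : ι → S) (h : α.Nonempty) :
    sgSum α f h = ∑ i ∈ α, f i := by
  rw [sgSum, ← List.foldl_map, List.foldl_eq_apply_foldr (init := 0), ← List.sum,
    (((α.erase _).sort_perm_toList _).map f).sum_eq, Finset.sum_map_toList,
    Finset.add_sum_erase _ f (α.min'_mem h)]

theorem crSet_iff_sum : CRSet A ↔ ∀ n, ∃ r : ℕ, ∀ M : Fin r → Fin n → S,
    ∃ α : Finset (Fin r), α.Nonempty ∧ ∃ s, ∀ j, s + ∑ i ∈ α, M i j ∈ A := by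
  simp only [CRSet, sgSum_eq_sum, exists_prop]

theorem CRSet.exists_sum (h : CRSet A) (J : Type*) [Finite J] :
    ∃ r : ℕ, ∀ M : Fin r → J → S,
      ∃ α : Finset (Fin r), α.Nonempty ∧ ∃ s, ∀ j, s + ∑ i ∈ α, M i j ∈ A := by
  have := Fintype.ofFinite J
  obtain ⟨r, hr⟩ := crSet_iff_sum.1 h (Fintype.card J)
  refine ⟨r, fun M => ?_⟩
  obtain ⟨α, hα, s, hs⟩ := hr fun i j => M i ((Fintype.equivFin J).symm j)
  exact ⟨α, hα, s, fun j => by simpa using hs (Fintype.equivFin J j)⟩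

theorem CRSet.mono (h : CRSet A) (hAB : A ⊆ B) : CRSet B := fun n =>
  (h n).imp fun _ hr M => (hr M).imp fun _ ⟨hα, s, hs⟩ => ⟨hα, s, fun j => hAB (hs j)⟩

theorem not_crSet_empty : ¬CRSet (∅ : Set S) := fun h =>
  let ⟨_, hr⟩ := h 1
  let ⟨_, _, _, hs⟩ := hr fun _ _ => 0
  hs 0

theorem CRSet.of_crSet_shifts (q : Ultrafilter S) (h : CRSet {x | (x + ·) ⁻¹' B ∈ q}) :
    CRSet B := by
  rw [crSet_iff_sum]
  intro n
  obtain ⟨r, hr⟩ := h.exists_sum (Fin n)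
  refine ⟨r, fun M => ?_⟩
  obtain ⟨α, hα, s, hs⟩ := hr M
  obtain ⟨y, hy⟩ := Ultrafilter.nonempty_of_mem (iInter_mem.2 hs)
  refine ⟨α, hα, s + y, fun j => ?_⟩
  simpa [add_right_comm] using Set.mem_iInter.1 hy j

theorem Combinatorics.Line.sum_apply_eq_add_sum_none {α ι M : Type*} [Fintype ι]
    [AddCommMonoid M] (l : Combinatorics.Line α ι) (Q : ι → α → M) (x₀ x : α) :
    ∑ i, Q i (l x i) = ∑ i with l.idxFun i ≠ none, Q i (l x₀ i) +
      ∑ i with l.idxFun i = none, Q i x := by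
  classical
  rw [← Finset.sum_filter_not_add_sum_filter _ (l.idxFun · = none)]
  congr 1
  · refine Finset.sum_congr rfl fun i hi => ?_
    obtain ⟨a, ha⟩ := Option.ne_none_iff_exists'.1 (Finset.mem_filter.1 hi).2
    rw [l.apply_some ha, l.apply_some ha]
  · exact Finset.sum_congr rfl fun i hi => by rw [l.apply_none _ _ (Finset.mem_filter.1 hi).2]

open Finset in
theorem CRSet.resolve_left (h : CRSet (B₁ ∪ B₂)) (h₁ : ¬CRSet B₁) : CRSet B₂ := by
  classical
  rw [crSet_iff_sum] at h₁ ⊢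
  push Not at h₁
  obtain ⟨n, hbad⟩ := h₁
  obtain ⟨x₀⟩ : Nonempty (Fin n) := by
    obtain ⟨P, hP⟩ := hbad 1
    obtain ⟨x, -⟩ := hP {0} (singleton_nonempty 0) 0
    exact ⟨x⟩
  intro m
  obtain ⟨ι, _, hHJ⟩ := Combinatorics.Line.exists_mono_in_high_dimension (Fin n) (Set (Fin m))
  obtain ⟨r, hr⟩ := h.exists_sum (Fin m × (ι → Fin n))
  refine ⟨r, fun M => ?_⟩
  -- Row `(t, i)` of the matrix `P` witnessing that `B₁` is not CR is added to row `i` of `M` in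
  -- column `ω t`. Along a line, the moving coordinates then contribute a row-sum of `P`, which
  -- leaves `B₁` for some `x`; so a line monochromatic for membership in `B₂` lies in `B₂`.
  let e := Fintype.equivFin (ι × Fin r)
  obtain ⟨P, hP⟩ := hbad (Fintype.card (ι × Fin r))
  obtain ⟨α, hα, s, hs⟩ := hr fun i jω => M i jω.1 + ∑ t, P (e (t, i)) (jω.2 t)
  obtain ⟨l, c, hc⟩ := hHJ fun ω =>
    {j | s + ∑ i ∈ α, (M i j + ∑ t, P (e (t, i)) (ω t)) ∈ B₂}
  let β := (({t | l.idxFun t = none} : Finset ι) ×ˢ α).map e.toEmbedding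
  have hβ : β.Nonempty := by
    obtain ⟨t, ht⟩ := l.proper
    exact (Finset.Nonempty.product ⟨t, by simpa using ht⟩ hα).map
  let F := ∑ t with l.idxFun t ≠ none, ∑ i ∈ α, P (e (t, i)) (l x₀ t)
  have key : ∀ j x, s + ∑ i ∈ α, (M i j + ∑ t, P (e (t, i)) (l x t)) =
      (s + F + ∑ i ∈ β, P i x) + ∑ i ∈ α, M i j := by
    intro j x
    rw [sum_add_distrib, sum_comm,
      l.sum_apply_eq_add_sum_none (fun t y => ∑ i ∈ α, P (e (t, i)) y) x₀ x, sum_map,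
      sum_product]
    simp only [Equiv.coe_toEmbedding]
    abel
  have hc_univ : ∀ j, j ∈ c := by
    intro j
    by_contra hj
    obtain ⟨x, hx⟩ := hP β hβ (s + F + ∑ i ∈ α, M i j)
    rcases hs (j, l x) with h₁ | h₂
    · exact hx (by rw [add_right_comm (s + F), ← key]; exact h₁)
    · exact hj (by rw [← hc x]; exact h₂)
  refine ⟨α, hα, s + F + ∑ i ∈ β, P i x₀, fun j => ?_⟩
  have hj := hc_univ j
  rw [← hc x₀] at hj
  rw [← key]
  exact hj


/-- Closure under intersection is the partition regularity of CR-sets, `CRSet.resolve_left`. -/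
def crFilter (S : Type*) [AddCommMonoid S] : Filter S where
  sets := {B | ¬CRSet Bᶜ}
  univ_sets := by simpa using not_crSet_empty
  sets_of_superset hB hBC hC := hB (hC.mono (Set.compl_subset_compl.2 hBC))
  inter_sets hB hC h := hC ((Set.compl_inter _ _ ▸ h).resolve_left hB)

theorem Ultrafilter.le_crFilter_iff {q : Ultrafilter S} : ↑q ≤ crFilter S ↔ ∀ B ∈ q, CRSet B := by
  refine ⟨fun h B hB => ?_, fun h B hB => Ultrafilter.compl_notMem_iff.1 fun hBc => hB (h _ hBc)⟩
  by_contra hB'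
  exact Ultrafilter.compl_notMem_iff.2 hB (h (by simpa [crFilter] using hB'))

theorem crFilter_inf_neBot {F : Filter S} (hF : ∀ C ∈ F, CRSet C) : (crFilter S ⊓ F).NeBot := by
  refine Filter.inf_neBot_iff.2 fun B hB C hC => ?_
  by_contra hBC
  exact hB ((hF C hC).mono fun x hx hxB => hBC ⟨x, hxB, hx⟩)

theorem CRSet.setOf_forall_map_mem {T K : Type*} [AddCommMonoid T] [Finite K] {D : Set S}
    (hD : CRSet D) (φ : K → T →+ S) (hφ : ∀ s, ∃ t, ∀ k, φ k t = s) :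
    CRSet {t | ∀ k, φ k t ∈ D} := by
  rw [crSet_iff_sum]
  intro n
  obtain ⟨r, hr⟩ := hD.exists_sum (Fin n × K)
  refine ⟨r, fun M => ?_⟩
  obtain ⟨α, hα, s, hs⟩ := hr fun i jk => φ jk.2 (M i jk.1)
  obtain ⟨t, ht⟩ := hφ s
  exact ⟨α, hα, t, fun j k => by simpa [ht] using hs (j, k)⟩

theorem CRSet.of_mem_iInf_comap {T K : Type*} [AddCommMonoid T] [Finite K] {p : Ultrafilter S}
    (hp : ∀ B ∈ p, CRSet B) (φ : K → T →+ S) (hφ : ∀ s, ∃ t, ∀ k, φ k t = s) {C : Set T}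
    (hC : C ∈ ⨅ k, comap (φ k) ↑p) : CRSet C := by
  obtain ⟨D, hD, hDC⟩ : ∃ D ∈ p, {t | ∀ k, φ k t ∈ D} ⊆ C :=
    iInf_sets_induct hC ⟨Set.univ, univ_mem, Set.subset_univ _⟩
      fun {k _ _} hC₁ ⟨D, hD, hDC⟩ => by
        obtain ⟨D₁, hD₁, hsub⟩ := mem_comap.1 hC₁
        exact ⟨D₁ ∩ D, inter_mem hD₁ hD, fun t ht => ⟨hsub (ht k).1, hDC fun k' => (ht k').2⟩⟩
  exact ((hp D hD).setOf_forall_map_mem φ hφ).mono hDC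

theorem Ultrafilter.uadd_le_crFilter {x : Ultrafilter S} (hx : ↑x ≤ crFilter S)
    (y : Ultrafilter S) : ↑(uadd x y) ≤ crFilter S :=
  le_crFilter_iff.2 fun _ hB => CRSet.of_crSet_shifts y (le_crFilter_iff.1 hx _ hB)

end CRSet

section Ultrafilter

variable {S T : Type*}

theorem mem_uadd [AddSemigroup S] {p q : Ultrafilter S} {B : Set S} :
    B ∈ uadd p q ↔ {x | (x + ·) ⁻¹' B ∈ q} ∈ p := Iff.rfl

theorem map_uadd [AddSemigroup S] [AddSemigroup T] {F : Type*} [FunLike F S T]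
    [AddHomClass F S T] (f : F) (p q : Ultrafilter S) :
    (uadd p q).map f = uadd (p.map f) (q.map f) := by
  ext B
  have : ∀ x, (x + ·) ⁻¹' (f ⁻¹' B) = f ⁻¹' ((f x + ·) ⁻¹' B) := fun x => by
    ext y; simp [map_add]
  simp only [Ultrafilter.mem_map, mem_uadd, this]
  rfl

theorem Ultrafilter.isClosed_setOf_coe_le (F : Filter S) :
    IsClosed {q : Ultrafilter S | ↑q ≤ F} := by
  simp only [Filter.le_def, Set.ofPred_forall]
  exact isClosed_biInter fun B _ => ultrafilter_isClosed_basic B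

theorem Ultrafilter.coe_le_comap_iff {f : S → T} {p : Ultrafilter T} {q : Ultrafilter S} :
    ↑q ≤ Filter.comap f ↑p ↔ q.map f = p := by
  rw [← Filter.map_le_iff_le_comap, ← Ultrafilter.coe_map, Ultrafilter.coe_le_coe]

attribute [local instance] Ultrafilter.add Ultrafilter.addSemigroup in
theorem exists_uadd_self_eq_of_isClosed [AddSemigroup S] {W : Set (Ultrafilter S)}
    (hW : IsClosed W) (hne : W.Nonempty) (hadd : ∀ x ∈ W, ∀ y ∈ W, uadd x y ∈ W) :
    ∃ q ∈ W, uadd q q = q :=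
  exists_idempotent_in_compact_add_subsemigroup Ultrafilter.continuous_add_left W hne
    hW.isCompact hadd

end Ultrafilter

theorem EssentialCRSet.setOf_forall_map_mem {S T K : Type*} [AddCommMonoid S] [AddCommMonoid T]
    [Finite K] {A : Set S} (hA : EssentialCRSet A) (φ : K → T →+ S)
    (hφ : ∀ s, ∃ t, ∀ k, φ k t = s) : EssentialCRSet {t | ∀ k, φ k t ∈ A} := by
  obtain ⟨p, hpp, hpCR, hAp⟩ := hA
  set F := crFilter T ⊓ ⨅ k, comap (φ k) ↑p
  have hF : F.NeBot := crFilter_inf_neBot fun _ => CRSet.of_mem_iInf_comap hpCR φ hφ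
  have hmap : ∀ z : Ultrafilter T, ↑z ≤ F → ∀ k, z.map (φ k) = p := fun z hz k =>
    Ultrafilter.coe_le_comap_iff.1 (hz.trans (inf_le_right.trans (iInf_le _ k)))
  have hadd : ∀ x ∈ {z : Ultrafilter T | ↑z ≤ F}, ∀ y ∈ {z : Ultrafilter T | ↑z ≤ F},
      ↑(uadd x y) ≤ F := fun x hx y hy =>
    le_inf (Ultrafilter.uadd_le_crFilter (hx.trans inf_le_left) y) <| le_iInf fun k => by
      rw [Ultrafilter.coe_le_comap_iff, map_uadd, hmap x hx, hmap y hy, hpp]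
  obtain ⟨q, hqF, hqq⟩ := exists_uadd_self_eq_of_isClosed (Ultrafilter.isClosed_setOf_coe_le F)
    ⟨Ultrafilter.of F, Ultrafilter.of_le F⟩ hadd
  refine ⟨q, hqq, Ultrafilter.le_crFilter_iff.1 (hqF.trans inf_le_left), ?_⟩
  rw [Set.ofPred_forall]
  exact iInter_mem.2 fun k => Ultrafilter.mem_map.1 ((hmap q hqF k).symm ▸ hAp)

/-- If `A ⊆ ℕ` is an essential CR-set and `l ∈ ℕ`, then
`{(a,b) : a, a+b, …, a+lb ∈ A}` is an essential CR-set in `(ℕ × ℕ, +)`. -/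
theorem essentialCRSet_abundance_AP (A : Set ℕ) (hA : EssentialCRSet A)
    (l : ℕ) :
    EssentialCRSet {p : ℕ × ℕ | ∀ k : ℕ, k ≤ l → p.1 + k * p.2 ∈ A} := by
  have := hA.setOf_forall_map_mem (K := Set.Iic l)
    (fun k => AddMonoidHom.fst ℕ ℕ + (k : ℕ) • AddMonoidHom.snd ℕ ℕ) fun s => ⟨(s, 0), by simp⟩
  simpa using this
end
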